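/- Let q = 2^m ≥ 8 and let k be an integer with 3 ≤ k ≤ q/2. Let S = {a_1, …, a_{2k}} be a set of 2k distinct elements of F_q with Σ_{i=1}^{2k} a_i ≠ 0, set λ = (Σ_{i=1}^{2k} a_i)^{−1}, and define v_i = (λ·u_i)^{q/2} for 1 ≤ i ≤ 2k. Then C_k(S,v,∞) is a [2k+1,k]_q almost self-dual code (self-orthogonal of dimension k), and it is either an MDS code or an NMDS code. -/

import Mathlib

open Polynomial Finset

noncomputable section

/-- Hamming weight of a vector. -/
def wt {F : Type*} [Field F] {N : ℕ} (w : Fin N → F) : ℕ := Set.ncard {i | w i ≠ 0}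

/-- The code `C_k(S,v,∞)` as a set of vectors of length `n+1`. -/
def codeSet {F : Type*} [Field F] {n : ℕ} (a v : Fin n → F) (k : ℕ) :
    Set (Fin (n + 1) → F) :=
  {w | ∃ f : F[X], f.natDegree ≤ k ∧ f.coeff (k - 1) = 0 ∧
    w = Fin.snoc (fun i => v i * f.eval (a i)) (f.coeff k)}

/-- The Euclidean dual of a set of vectors. -/
def dualSet {F : Type*} [Field F] {N : ℕ} (C : Set (Fin N → F)) : Set (Fin N → F) :=
  {y | ∀ x ∈ C, ∑ i, x i * y i = 0}

/-- A (nonzero) code has minimum distance `d`: some nonzero codeword has weight `d`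
and every nonzero codeword has weight at least `d`. -/
def IsMinDist {F : Type*} [Field F] {N : ℕ} (C : Set (Fin N → F)) (d : ℕ) : Prop :=
  (∃ w ∈ C, w ≠ 0 ∧ wt w = d) ∧ ∀ w ∈ C, w ≠ 0 → d ≤ wt w

/-- `u i = ∏_{j ≠ i} (a i - a j)⁻¹`. -/
def uCoeff {F : Type*} [Field F] {n : ℕ} (a : Fin n → F) (i : Fin n) : F :=
  ∏ j ∈ Finset.univ.erase i, (a i - a j)⁻¹

/-- The set of Schur (componentwise) products of elements of two codes. -/
def schurSet {F : Type*} [Field F] {N : ℕ} (C D : Set (Fin N → F)) : Set (Fin N → F) :=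
  {w | ∃ c ∈ C, ∃ d ∈ D, w = c * d}

/-!
The codeword of `f ∈ V_k` is `(v_i f(a_i))_i` followed by `f_k`, so since `v_i² = λ u_i` the
inner product of the codewords of `f` and `g` is `λ ∑ u_i (fg)(a_i) + f_k g_k`. Lagrange
interpolation gives `∑ u_i h(a_i) = h_{2k-1} + h_{2k} ∑ a_i` for `deg h ≤ 2k`; for `h = fg` the
first term vanishes because `f_{k-1} = g_{k-1} = 0`, so the pairing is `2 f_k g_k = 0`.

A nonzero `f ∈ V_k` has at most `k` roots, and at most `k - 2` if `f_k = 0`, so every nonzero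
codeword has weight at least `k + 1`, while `∏_{i ∈ T} (x - a_i)` with `|T| = k - 2` gives weight
`k + 2`. A dual word of weight `< k` would, after scaling by `v`, be orthogonal to the evaluations
of all polynomials of degree `≤ k - 2` while having at most `k - 1` nonzero entries, which is
impossible. Finally, a codeword of weight `k + 1` has `k` zeros, and the restriction of the
`k`-dimensional code to them is not onto, which produces a dual word supported there.
-/

section Weight

variable {F : Type*} [Field F]

lemma wt_eq_card [DecidableEq F] {N : ℕ} (w : Fin N → F) : wt w = #{i | w i ≠ 0} := by
  rw [wt, ← Set.ncard_coe_finset]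
  congr 1
  ext
  simp

lemma wt_snoc [DecidableEq F] {n : ℕ} (g : Fin n → F) (t : F) :
    wt (Fin.snoc g t : Fin (n + 1) → F) = #{i | g i ≠ 0} + if t = 0 then 0 else 1 := by
  rw [wt_eq_card, card_filter, Fin.sum_univ_castSucc, card_filter]
  simp only [Fin.snoc_castSucc, Fin.snoc_last, ite_not]

lemma sum_snoc_mul {n : ℕ} (g : Fin n → F) (t : F) (y : Fin (n + 1) → F) :
    ∑ i, (Fin.snoc g t : Fin (n + 1) → F) i * y i =
      ∑ i, g i * y i.castSucc + t * y (Fin.last n) := by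
  simp [Fin.sum_univ_castSucc]

lemma isMinDist_of_le {N : ℕ} {C : Set (Fin N → F)} {d : ℕ}
    (hC : ∀ w ∈ C, w ≠ 0 → d ≤ wt w) {w : Fin N → F} (hw : w ∈ C) (hw0 : w ≠ 0)
    (hwd : wt w ≤ d) : IsMinDist C d :=
  ⟨⟨w, hw, hw0, le_antisymm hwd (hC w hw hw0)⟩, hC⟩

end Weight

section DualCode

variable {F ι : Type*} [Field F] [Fintype ι]

-- The restriction `ρ` kills `c`, so it is not onto `s → F`; a functional vanishing on its range
-- is the dot product with the vector `y` we are looking for.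
lemma exists_orthogonal_supported_of_finrank_le (C : Submodule F (ι → F)) (s : Finset ι)
    (hs : Module.finrank F C ≤ #s) {c : ι → F} (hc : c ∈ C) (hc0 : c ≠ 0)
    (hcs : ∀ i ∈ s, c i = 0) :
    ∃ y : ι → F, y ≠ 0 ∧ (∀ i ∉ s, y i = 0) ∧ ∀ x ∈ C, ∑ i, x i * y i = 0 := by
  classical
  set ρ : C →ₗ[F] (s → F) := (LinearMap.funLeft F F Subtype.val).comp C.subtype
  have hker : LinearMap.ker ρ ≠ ⊥ := by
    refine (Submodule.ne_bot_iff _).2 ⟨⟨c, hc⟩, ?_, by simpa using hc0⟩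
    ext j
    exact hcs j j.2
  have hρ : LinearMap.range ρ < ⊤ := by
    refine lt_top_iff_ne_top.2 fun htop => ?_
    have hrank := ρ.finrank_range_add_finrank_ker
    have hpos := Nat.pos_of_ne_zero fun h => hker (Submodule.finrank_eq_zero.1 h)
    rw [htop, finrank_top, Module.finrank_fintype_fun_eq_card, Fintype.card_coe] at hrank
    omega
  obtain ⟨φ, hφ0, hφ⟩ := Submodule.exists_dual_map_eq_bot_of_lt_top hρ inferInstance
  set y' : s → F := fun j => φ fun j' => if j = j' then 1 else 0
  have hφy' : ∀ z, φ z = ∑ j, z j * y' j := fun z => by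
    simp [φ.pi_apply_eq_sum_univ z, y']
  refine ⟨fun i => if h : i ∈ s then y' ⟨i, h⟩ else 0, fun hy => hφ0 ?_,
    fun i hi => dif_neg hi, fun x hx => ?_⟩
  · have hy' : ∀ j, y' j = 0 := fun j => by simpa [j.2] using congrFun hy j
    refine LinearMap.ext fun z => ?_
    rw [hφy', LinearMap.zero_apply]
    exact sum_eq_zero fun j _ => by rw [hy', mul_zero]
  · have hφx : φ (ρ ⟨x, hx⟩) = 0 := by
      have hmem := Submodule.mem_map_of_mem (f := φ) (LinearMap.mem_range_self ρ ⟨x, hx⟩)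
      rw [hφ] at hmem
      exact hmem
    rw [hφy'] at hφx
    rw [← sum_subset (subset_univ s) fun i _ hi => by simp [hi], ← sum_coe_sort s]
    simpa [ρ] using hφx

lemma exists_mem_dualSet_wt_le {N : ℕ} (C : Submodule F (Fin N → F)) {c : Fin N → F}
    (hc : c ∈ C) (hc0 : c ≠ 0) (hwt : wt c + Module.finrank F C ≤ N) :
    ∃ y ∈ dualSet (C : Set (Fin N → F)), y ≠ 0 ∧ wt y ≤ Module.finrank F C := by
  classical
  have hzeros : wt c + #{i | c i = 0} = N := by
    rw [wt_eq_card, add_comm, card_filter_add_card_filter_not, card_univ,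
      Fintype.card_fin]
  obtain ⟨s, hs, hscard⟩ := exists_subset_card_eq (s := {i | c i = 0})
    (n := Module.finrank F C) (by omega)
  obtain ⟨y, hy0, hys, hy⟩ := exists_orthogonal_supported_of_finrank_le C s hscard.ge hc hc0
    fun i hi => (mem_filter.1 (hs hi)).2
  refine ⟨y, hy, hy0, ?_⟩
  rw [wt_eq_card, ← hscard]
  exact card_le_card fun i hi => by_contra fun his => (mem_filter.1 hi).2 (hys i his)

end DualCode

section Polynomials

variable {F : Type*} [Field F]

lemma sum_uCoeff_mul_eval_of_degree_lt {n : ℕ} {a : Fin n → F} (ha : Function.Injective a)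
    {h : F[X]} (hdeg : h.degree < n) :
    ∑ i, uCoeff a i * h.eval (a i) = h.coeff (n - 1) := by
  have hsum := Lagrange.coeff_eq_sum (s := univ) (fun i _ j _ hij => ha hij) (P := h)
    (by simpa using hdeg)
  rw [card_univ, Fintype.card_fin] at hsum
  rw [hsum]
  exact sum_congr rfl fun i _ => by rw [uCoeff, prod_inv_distrib, div_eq_inv_mul]

lemma sum_uCoeff_mul_eval {n : ℕ} (hn : 0 < n) {a : Fin n → F} (ha : Function.Injective a)
    {h : F[X]} (hdeg : h.natDegree ≤ n) :
    ∑ i, uCoeff a i * h.eval (a i) = h.coeff (n - 1) + h.coeff n * ∑ i, a i := by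
  set P := Lagrange.nodal univ a
  have hPdeg : P.natDegree = n := by simp [P, Lagrange.natDegree_nodal]
  have hPn : P.coeff n = 1 := hPdeg ▸ (Lagrange.nodal_monic (s := univ) (v := a)).coeff_natDegree
  have hPpred : P.coeff (n - 1) = -∑ i, a i := by
    simpa [P, Lagrange.nodal] using prod_X_sub_C_coeff_card_pred univ a (by simpa using hn)
  set r := h - C (h.coeff n) * P
  have hr : r.degree < n := by
    refine (degree_lt_iff_coeff_zero _ _).2 fun m hm => ?_
    obtain rfl | hm := hm.eq_or_lt
    · simp [r, hPn]
    · simp [r, coeff_eq_zero_of_natDegree_lt (hdeg.trans_lt hm),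
        coeff_eq_zero_of_natDegree_lt (hPdeg ▸ hm : P.natDegree < m)]
  calc ∑ i, uCoeff a i * h.eval (a i) = ∑ i, uCoeff a i * r.eval (a i) := by
        simp [r, P, Lagrange.eval_nodal_at_node]
    _ = r.coeff (n - 1) := sum_uCoeff_mul_eval_of_degree_lt ha hr
    _ = h.coeff (n - 1) + h.coeff n * ∑ i, a i := by simp [r, hPpred]

lemma coeff_mul_two_mul_sub_one_eq_zero {k : ℕ} {f g : F[X]} (hf : f.natDegree ≤ k)
    (hg : g.natDegree ≤ k) (hf1 : f.coeff (k - 1) = 0) (hg1 : g.coeff (k - 1) = 0) :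
    (f * g).coeff (2 * k - 1) = 0 := by
  rw [coeff_mul]
  refine sum_eq_zero fun p hp => ?_
  rw [HasAntidiagonal.mem_antidiagonal] at hp
  by_cases h1 : k < p.1
  · rw [coeff_eq_zero_of_natDegree_lt (hf.trans_lt h1), zero_mul]
  by_cases h2 : k < p.2
  · rw [coeff_eq_zero_of_natDegree_lt (hg.trans_lt h2), mul_zero]
  obtain h | h : p.1 = k - 1 ∨ p.2 = k - 1 := by omega
  · rw [h, hf1, zero_mul]
  · rw [h, hg1, mul_zero]

lemma card_sub_natDegree_le_card_eval_ne_zero {ι : Type*} [Fintype ι] [DecidableEq F]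
    {a : ι → F} (ha : Function.Injective a) {f : F[X]} (hf : f ≠ 0) :
    Fintype.card ι - f.natDegree ≤ #{i | f.eval (a i) ≠ 0} := by
  have hroots : #{i | f.eval (a i) = 0} ≤ f.natDegree := by
    rw [← card_image_of_injective _ ha]
    refine card_le_degree_of_subset_roots fun x hx => ?_
    obtain ⟨i, hi, rfl⟩ := mem_image.1 hx
    exact (mem_roots hf).2 (mem_filter.1 hi).2
  have := card_filter_add_card_filter_not (s := univ) fun i => f.eval (a i) = 0
  simp only [card_univ, ← ne_eq] at this
  omega

lemma eq_zero_of_forall_sum_mul_eval_eq_zero {ι : Type*} [Fintype ι] [DecidableEq ι]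
    [DecidableEq F] {a : ι → F} (ha : Function.Injective a) {w : ι → F} {d : ℕ}
    (hw : ∀ h : F[X], h.natDegree ≤ d → ∑ i, w i * h.eval (a i) = 0)
    (hcard : #{i | w i ≠ 0} ≤ d + 1) : w = 0 := by
  by_contra hne
  obtain ⟨j, hj⟩ := Function.ne_iff.1 hne
  set T : Finset ι := {i | w i ≠ 0}
  have hjT : j ∈ T := by simpa [T] using hj
  have hsum := hw (Lagrange.nodal (T.erase j) a)
    (by rw [Lagrange.natDegree_nodal, card_erase_of_mem hjT]; omega)
  rw [sum_eq_single j (fun i _ hij => ?_) (by simp)] at hsum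
  · exact mul_ne_zero hj
      (Lagrange.eval_nodal_not_at_node fun i hi => ha.ne (ne_of_mem_erase hi).symm) hsum
  · by_cases hi : w i = 0
    · rw [hi, zero_mul]
    · rw [Lagrange.eval_nodal_at_node (mem_erase.2 ⟨hij, by simpa [T] using hi⟩), mul_zero]

end Polynomials

section Code

variable {F : Type*} [Field F]

-- The paper's `V_k`.
def polySpace (F : Type*) [Field F] (k : ℕ) : Submodule F F[X] :=
  degreeLE F k ⊓ LinearMap.ker (lcoeff F (k - 1))

lemma mem_polySpace {k : ℕ} {f : F[X]} :
    f ∈ polySpace F k ↔ f.natDegree ≤ k ∧ f.coeff (k - 1) = 0 := by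
  simp [polySpace, mem_degreeLE, natDegree_le_iff_degree_le]

lemma finrank_polySpace {k : ℕ} (hk : 1 ≤ k) : Module.finrank F (polySpace F k) = k := by
  have : FiniteDimensional F (degreeLT F (k + 1)) :=
    (degreeLTEquiv F (k + 1)).symm.finiteDimensional
  set ψ := (lcoeff F (k - 1)).domRestrict (degreeLT F (k + 1))
  have hψ : Function.Surjective ψ := fun t =>
    ⟨⟨C t * X ^ (k - 1), mem_degreeLT.2 ((degree_C_mul_X_pow_le _ _).trans_lt
      (by norm_cast; omega))⟩, by simp [ψ]⟩
  have hrank := ψ.finrank_range_add_finrank_ker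
  rw [LinearMap.range_eq_top.2 hψ, finrank_top, Module.finrank_self,
    (degreeLTEquiv F (k + 1)).finrank_eq, Module.finrank_fin_fun] at hrank
  rw [polySpace, ← degreeLT_succ_eq_degreeLE, ← Submodule.map_comap_subtype,
    Submodule.finrank_map_subtype_eq, ← LinearMap.ker_domRestrict]
  change Module.finrank F (LinearMap.ker ψ) = k
  omega

variable {n : ℕ} (a v : Fin n → F) (k : ℕ)

def evalCode : F[X] →ₗ[F] (Fin (n + 1) → F) where
  toFun f := Fin.snoc (fun i => v i * f.eval (a i)) (f.coeff k)
  map_add' f g := by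
    ext x
    refine Fin.lastCases ?_ (fun i => ?_) x <;> simp [mul_add]
  map_smul' c f := by
    ext x
    refine Fin.lastCases ?_ (fun i => ?_) x <;> simp [mul_left_comm]

lemma codeSet_eq_map : codeSet a v k = (polySpace F k).map (evalCode a v k) := by
  ext w
  simp [codeSet, mem_polySpace, evalCode, and_assoc, eq_comm]

variable {a v k}

lemma injective_evalCode_comp_subtype (ha : Function.Injective a) (hv : ∀ i, v i ≠ 0)
    (hkn : k < n) : Function.Injective ((evalCode a v k).comp (polySpace F k).subtype) := by
  refine (injective_iff_map_eq_zero _).2 fun ⟨f, hf⟩ hf0 => ?_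
  have heval : ∀ i, f.eval (a i) = 0 := fun i =>
    (mul_eq_zero.1 (by simpa [evalCode] using congrFun hf0 i.castSucc)).resolve_left (hv i)
  ext1
  exact eq_zero_of_natDegree_lt_card_of_eval_eq_zero f ha heval
    (by simpa using (mem_polySpace.1 hf).1.trans_lt hkn)

lemma finrank_map_evalCode (ha : Function.Injective a) (hv : ∀ i, v i ≠ 0) (hk : 1 ≤ k)
    (hkn : k < n) : Module.finrank F ((polySpace F k).map (evalCode a v k)) = k := by
  rw [← Submodule.range_subtype (polySpace F k), ← LinearMap.range_comp,
    LinearMap.finrank_range_of_inj (injective_evalCode_comp_subtype ha hv hkn),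
    finrank_polySpace hk]

lemma wt_evalCode [DecidableEq F] (hv : ∀ i, v i ≠ 0) (f : F[X]) :
    wt (evalCode a v k f) = #{i | f.eval (a i) ≠ 0} + if f.coeff k = 0 then 0 else 1 := by
  simp [evalCode, wt_snoc, hv]

end Code

section DoubledCode

variable {F : Type*} [Field F] {k : ℕ} {a v : Fin (2 * k) → F}

lemma le_wt_of_mem_codeSet [DecidableEq F] (hk : 1 ≤ k) (ha : Function.Injective a)
    (hv : ∀ i, v i ≠ 0) {w : Fin (2 * k + 1) → F} (hw : w ∈ codeSet a v k) (hw0 : w ≠ 0) :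
    k + 1 ≤ wt w := by
  obtain ⟨f, hf, hf1, rfl⟩ := hw
  have hf0 : f ≠ 0 := by rintro rfl; exact hw0 (map_zero (evalCode a v k))
  change k + 1 ≤ wt (evalCode a v k f)
  have hcard := card_sub_natDegree_le_card_eval_ne_zero ha hf0
  rw [wt_evalCode hv, Fintype.card_fin] at *
  by_cases hfk : f.coeff k = 0
  · have hf2 : f.natDegree ≤ k - 2 := by
      refine natDegree_le_iff_coeff_eq_zero.2 fun j hj => ?_
      obtain rfl | rfl | hj : j = k - 1 ∨ j = k ∨ k < j := by omega
      exacts [hf1, hfk, coeff_eq_zero_of_natDegree_lt (hf.trans_lt hj)]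
    omega
  · rw [if_neg hfk]
    omega

lemma exists_mem_codeSet_wt_eq [DecidableEq F] (hk : 2 ≤ k) (ha : Function.Injective a)
    (hv : ∀ i, v i ≠ 0) : ∃ w ∈ codeSet a v k, w ≠ 0 ∧ wt w = k + 2 := by
  obtain ⟨T, -, hT⟩ := exists_subset_card_eq (s := (univ : Finset (Fin (2 * k)))) (n := k - 2)
    (by simp; omega)
  set f := Lagrange.nodal T a
  have hfdeg : f.natDegree = k - 2 := by rw [Lagrange.natDegree_nodal, hT]
  have hzeros : #{i | f.eval (a i) ≠ 0} = k + 2 := by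
    have hfilter : ({i | f.eval (a i) ≠ 0} : Finset _) = univ \ T := by
      ext i
      by_cases hi : i ∈ T
      · simp [hi, f, Lagrange.eval_nodal_at_node]
      · have hne : ∀ j ∈ T, a i ≠ a j := fun j hj => ha.ne (ne_of_mem_of_not_mem hj hi).symm
        simp [hi, f, Lagrange.eval_nodal_not_at_node hne]
    rw [hfilter, card_sdiff_of_subset (subset_univ T), hT, card_univ, Fintype.card_fin]
    omega
  have hwt : wt (evalCode a v k f) = k + 2 := by
    rw [wt_evalCode hv, hzeros, coeff_eq_zero_of_natDegree_lt (by omega), if_pos rfl]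
  refine ⟨evalCode a v k f, ⟨f, by omega, coeff_eq_zero_of_natDegree_lt (by omega), rfl⟩,
    fun h0 => ?_, hwt⟩
  rw [h0, wt_eq_card] at hwt
  simp at hwt

lemma le_wt_of_mem_dualSet (hk : 2 ≤ k) (ha : Function.Injective a) (hv : ∀ i, v i ≠ 0)
    {y : Fin (2 * k + 1) → F} (hy : y ∈ dualSet (codeSet a v k)) (hy0 : y ≠ 0) :
    k ≤ wt y := by
  classical
  by_contra! hlt
  have hinit : (fun i : Fin (2 * k) => v i * y i.castSucc) = 0 := by
    refine eq_zero_of_forall_sum_mul_eval_eq_zero ha (d := k - 2) (fun h hh => ?_) ?_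
    · have hlow : h.natDegree < k := by omega
      have hsum := hy _ ⟨h, hlow.le, coeff_eq_zero_of_natDegree_lt (by omega), rfl⟩
      rw [sum_snoc_mul, coeff_eq_zero_of_natDegree_lt hlow, zero_mul, add_zero] at hsum
      rw [← hsum]
      exact sum_congr rfl fun i _ => by ring
    · calc #{i | v i * y i.castSucc ≠ 0} ≤ #{i | y i ≠ 0} :=
            card_le_card_of_injOn Fin.castSucc (fun i hi => by simp_all)
              (Fin.castSucc_injective _).injOn
        _ ≤ k - 2 + 1 := by rw [← wt_eq_card]; omega
  have hinit' : ∀ i : Fin (2 * k), y i.castSucc = 0 := fun i =>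
    (mul_eq_zero.1 (congrFun hinit i)).resolve_left (hv i)
  have hlast := hy _ ⟨X ^ k, by simp, by simp [coeff_X_pow]; omega, rfl⟩
  simp [sum_snoc_mul, hinit'] at hlast
  exact hy0 (funext fun i => Fin.lastCases hlast hinit' i)

lemma codeSet_subset_dualSet (h2 : (2 : F) = 0) (hk : 1 ≤ k) (ha : Function.Injective a)
    {lam : F} (hlam : lam * ∑ i, a i = 1) (hv2 : ∀ i, v i ^ 2 = lam * uCoeff a i) :
    codeSet a v k ⊆ dualSet (codeSet a v k) := by
  rintro _ ⟨g, hg, hg1, rfl⟩ _ ⟨f, hf, hf1, rfl⟩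
  have hterm : ∀ i, v i * f.eval (a i) * (v i * g.eval (a i)) =
      lam * (uCoeff a i * (f * g).eval (a i)) := fun i => by
    rw [eval_mul, ← mul_assoc lam, ← hv2]
    ring
  have hcoeff : (f * g).coeff (2 * k) = f.coeff k * g.coeff k := by
    rw [two_mul]
    exact coeff_mul_add_eq_of_natDegree_le hf hg
  rw [sum_snoc_mul]
  simp only [Fin.snoc_castSucc, Fin.snoc_last]
  rw [sum_congr rfl fun i _ => hterm i, ← mul_sum,
    sum_uCoeff_mul_eval (by omega) ha (natDegree_mul_le.trans (by omega)),
    coeff_mul_two_mul_sub_one_eq_zero hf hg hf1 hg1, hcoeff]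
  linear_combination (f.coeff k * g.coeff k) * hlam + f.coeff k * g.coeff k * h2

end DoubledCode

section CharTwo

variable {F : Type*} [Field F] [Fintype F] {m : ℕ}

lemma two_eq_zero_of_card_eq_two_pow (hcard : Fintype.card F = 2 ^ m) : (2 : F) = 0 := by
  have h := FiniteField.cast_card_eq_zero F
  rw [hcard, Nat.cast_pow, Nat.cast_ofNat] at h
  exact pow_eq_zero_iff'.1 h |>.1

lemma sq_pow_card_div_two (hcard : Fintype.card F = 2 ^ m) (x : F) :
    (x ^ (Fintype.card F / 2)) ^ 2 = x := by
  have hm : m ≠ 0 := by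
    rintro rfl
    exact (Fintype.one_lt_card (α := F)).ne' hcard
  rw [← pow_mul, Nat.div_mul_cancel (hcard ▸ dvd_pow_self 2 hm), FiniteField.pow_card]

end CharTwo

theorem stmt16_general {F : Type*} [Field F] [Fintype F] (m k : ℕ)
    (hcard : Fintype.card F = 2 ^ m)
    (hk3 : 3 ≤ k)
    (a : Fin (2 * k) → F) (ha : Function.Injective a)
    (hsum : ∑ i, a i ≠ 0)
    (lam : F) (hlam : lam = (∑ i, a i)⁻¹)
    (v : Fin (2 * k) → F)
    (hv : ∀ i, v i = (lam * uCoeff a i) ^ (Fintype.card F / 2)) :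
    codeSet a v k ⊆ dualSet (codeSet a v k) ∧
      Module.finrank F (Submodule.span F (codeSet a v k)) = k ∧
      (IsMinDist (codeSet a v k) (k + 2) ∨
        (IsMinDist (codeSet a v k) (k + 1) ∧ IsMinDist (dualSet (codeSet a v k)) k)) := by
  classical
  have hlam1 : lam * ∑ i, a i = 1 := hlam ▸ inv_mul_cancel₀ hsum
  have hv2 : ∀ i, v i ^ 2 = lam * uCoeff a i := fun i => by rw [hv, sq_pow_card_div_two hcard]
  have hv0 : ∀ i, v i ≠ 0 := fun i hi => by
    have := hv2 i
    rw [hi, zero_pow two_ne_zero] at this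
    -- `uCoeff a i` is `Lagrange.nodalWeight univ a i` by definition
    exact mul_ne_zero (left_ne_zero_of_mul_eq_one hlam1)
      (Lagrange.nodalWeight_ne_zero (fun i _ j _ hij => ha hij) (mem_univ i)) this.symm
  set C := (polySpace F k).map (evalCode a v k)
  have hC : codeSet a v k = C := codeSet_eq_map a v k
  have hdim : Module.finrank F C = k := finrank_map_evalCode ha hv0 (by omega) (by omega)
  refine ⟨codeSet_subset_dualSet (two_eq_zero_of_card_eq_two_pow hcard) (by omega) ha hlam1 hv2,
    by rw [hC, Submodule.span_eq, hdim], ?_⟩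
  by_cases hlow : ∃ w ∈ codeSet a v k, w ≠ 0 ∧ wt w ≤ k + 1
  · obtain ⟨c, hc, hc0, hcwt⟩ := hlow
    obtain ⟨y, hy, hy0, hywt⟩ := exists_mem_dualSet_wt_le C (by rwa [hC] at hc) hc0 (by omega)
    exact Or.inr ⟨isMinDist_of_le (fun w => le_wt_of_mem_codeSet (by omega) ha hv0) hc hc0 hcwt,
      isMinDist_of_le (fun z => le_wt_of_mem_dualSet (by omega) ha hv0) (hC ▸ hy) hy0
        (hywt.trans hdim.le)⟩
  · push Not at hlow
    obtain ⟨w, hw, hw0, hwwt⟩ := exists_mem_codeSet_wt_eq (by omega) ha hv0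
    exact Or.inl (isMinDist_of_le (fun z hz hz0 => hlow z hz hz0) hw hw0 hwwt.le)

theorem stmt16 {F : Type*} [Field F] [Fintype F] (m k : ℕ)
    (hcard : Fintype.card F = 2 ^ m) (h8 : 8 ≤ Fintype.card F)
    (hk3 : 3 ≤ k) (hk : k ≤ Fintype.card F / 2)
    (a : Fin (2 * k) → F) (ha : Function.Injective a)
    (hsum : ∑ i, a i ≠ 0)
    (lam : F) (hlam : lam = (∑ i, a i)⁻¹)
    (v : Fin (2 * k) → F)
    (hv : ∀ i, v i = (lam * uCoeff a i) ^ (Fintype.card F / 2)) :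
    codeSet a v k ⊆ dualSet (codeSet a v k) ∧
      Module.finrank F (Submodule.span F (codeSet a v k)) = k ∧
      (IsMinDist (codeSet a v k) (k + 2) ∨
        (IsMinDist (codeSet a v k) (k + 1) ∧ IsMinDist (dualSet (codeSet a v k)) k)) :=
  stmt16_general m k hcard hk3 a ha hsum lam hlam v hv
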